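/- Let U be a right-free (G,H)-biset, V an (H,K)-biset, (u,v) ∈ U × V, and L ≤ G. Then L ≤ p₁((G × K)_{[u,v]}) if and only if L ≤ p₁((G × H)_u) and Lᵘ ≤ p₁((H × K)_v). -/

import Mathlib

/-! The stabilizer of `[u, v]` is the composition `(G × H)_u * (H × K)_v` of the two stabilizers,
i.e. `(g, k)` fixes `[u, v]` iff some `h` has `(g, h)` fixing `u` and `(h, k)` fixing `v`.
Freeness of `U` makes this `h` unique for a given `g`, so `L ≤ p₁` of the composition splits into
a condition on `u` alone and a condition on `v` along `Lᵘ`. -/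

/-- For `L ≤ A` and `D ≤ A × B`, the subgroup `{b | ∃ l ∈ L, (l,b) ∈ D} ≤ B`;
for `D = (A × B)_w` the stabilizer of a point `w` of an `(A,B)`-biset, this is `Lʷ`. -/
def lstarSub {A B : Type*} [Group A] [Group B] (L : Subgroup A) (D : Subgroup (A × B)) :
    Subgroup B where
  carrier := {b | ∃ l ∈ L, (l, b) ∈ D}
  one_mem' := ⟨1, L.one_mem, D.one_mem⟩
  mul_mem' := fun ⟨l, hl, hD⟩ ⟨l', hl', hD'⟩ =>
    ⟨l * l', L.mul_mem hl hl', D.mul_mem hD hD'⟩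
  inv_mem' := fun ⟨l, hl, hD⟩ => ⟨l⁻¹, L.inv_mem hl, D.inv_mem hD⟩

section Tensor

variable (G H K : Type*) [Group G] [Group H] [Group K]
variable (U V : Type*) [MulAction (G × H) U] [MulAction (H × K) V]

/-- The setoid on `U × V` whose classes are the `H`-orbits for `h • (u,v) = (u h⁻¹, h v)`;
bisets are encoded as `(G × H)`-sets via `(g,h) • u = g u h⁻¹`. -/
def tensorSetoid : Setoid (U × V) where
  r p q := ∃ h : H, p.1 = ((1, h) : G × H) • q.1 ∧ p.2 = ((h, 1) : H × K) • q.2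
  iseqv := by
    constructor
    · intro p
      exact ⟨1, by simp [← Prod.one_eq_mk], by simp [← Prod.one_eq_mk]⟩
    · rintro p q ⟨h, h1, h2⟩
      refine ⟨h⁻¹, ?_, ?_⟩ <;>
        simp [h1, h2, smul_smul, Prod.mk_mul_mk, ← Prod.one_eq_mk]
    · rintro p q r ⟨h, h1, h2⟩ ⟨h', h1', h2'⟩
      refine ⟨h * h', ?_, ?_⟩ <;>
        simp [h1, h2, h1', h2', smul_smul, Prod.mk_mul_mk]

/-- The biset tensor product `U ×_H V`. -/
def Tensor : Type _ := Quotient (tensorSetoid G H K U V)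

/-- The class `[u, v] ∈ U ×_H V`. -/
def tmk (p : U × V) : Tensor G H K U V := Quotient.mk (tensorSetoid G H K U V) p

/-- The `(G,K)`-biset structure on `U ×_H V`. -/
instance : MulAction (G × K) (Tensor G H K U V) where
  smul a := Quotient.map
    (fun p => (((a.1, 1) : G × H) • p.1, ((1, a.2) : H × K) • p.2))
    (by
      rintro p q ⟨h, h1, h2⟩
      exact ⟨h, by simp [h1, smul_smul, Prod.mk_mul_mk],
        by simp [h2, smul_smul, Prod.mk_mul_mk]⟩)
  one_smul := by
    intro x
    induction x using Quotient.ind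
    refine congrArg (Quotient.mk _) ?_
    simp [← Prod.one_eq_mk]
  mul_smul := by
    intro a b x
    induction x using Quotient.ind
    refine congrArg (Quotient.mk _) ?_
    simp [smul_smul, Prod.mk_mul_mk]

/-- `p₁(D)`, the image of `D ≤ A × B` under the first projection. -/
def projFst {A B : Type*} [Group A] [Group B] (D : Subgroup (A × B)) : Subgroup A :=
  D.map (MonoidHom.fst A B)

section StarProd

variable {A B C : Type*} [Group A] [Group B] [Group C]

/-- Bouc's composition `D * E` of `D ≤ A × B` and `E ≤ B × C`. -/
def starProd (D : Subgroup (A × B)) (E : Subgroup (B × C)) : Subgroup (A × C) where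
  carrier := {x | ∃ b, (x.1, b) ∈ D ∧ (b, x.2) ∈ E}
  one_mem' := ⟨1, D.one_mem, E.one_mem⟩
  mul_mem' := fun ⟨b, hD, hE⟩ ⟨b', hD', hE'⟩ => ⟨b * b', D.mul_mem hD hD', E.mul_mem hE hE'⟩
  inv_mem' := fun ⟨b, hD, hE⟩ => ⟨b⁻¹, D.inv_mem hD, E.inv_mem hE⟩

lemma mk_mem_starProd_iff {D : Subgroup (A × B)} {E : Subgroup (B × C)} {a : A} {c : C} :
    (a, c) ∈ starProd D E ↔ ∃ b, (a, b) ∈ D ∧ (b, c) ∈ E :=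
  Iff.rfl

lemma mem_projFst_iff {D : Subgroup (A × B)} {a : A} : a ∈ projFst D ↔ ∃ b, (a, b) ∈ D := by
  simp [projFst]

lemma mem_lstarSub_iff {L : Subgroup A} {D : Subgroup (A × B)} {b : B} :
    b ∈ lstarSub L D ↔ ∃ a ∈ L, (a, b) ∈ D :=
  Iff.rfl

lemma eq_of_mk_mem_of_mk_mem {D : Subgroup (A × B)} (hD : ∀ b, ((1 : A), b) ∈ D → b = 1)
    {a : A} {b b' : B} (hb : (a, b) ∈ D) (hb' : (a, b') ∈ D) : b = b' := by
  have : ((1 : A), b⁻¹ * b') ∈ D := by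
    simpa using D.mul_mem (D.inv_mem hb) hb'
  exact inv_mul_eq_one.mp (hD _ this)

lemma le_projFst_starProd_iff {D : Subgroup (A × B)} (E : Subgroup (B × C))
    (hD : ∀ b, ((1 : A), b) ∈ D → b = 1) (L : Subgroup A) :
    L ≤ projFst (starProd D E) ↔ L ≤ projFst D ∧ lstarSub L D ≤ projFst E := by
  simp only [SetLike.le_def, mem_projFst_iff, mem_lstarSub_iff, mk_mem_starProd_iff]
  constructor
  · intro hL
    refine ⟨fun a ha => ?_, ?_⟩
    · obtain ⟨_, b, hab, _⟩ := hL ha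
      exact ⟨b, hab⟩
    · rintro b ⟨a, ha, hab⟩
      obtain ⟨c, b', hab', hbc⟩ := hL ha
      obtain rfl := eq_of_mk_mem_of_mk_mem hD hab hab'
      exact ⟨c, hbc⟩
  · rintro ⟨hLD, hLE⟩ a ha
    obtain ⟨b, hab⟩ := hLD ha
    obtain ⟨c, hbc⟩ := hLE ⟨a, ha, hab⟩
    exact ⟨c, b, hab, hbc⟩

end StarProd

lemma tmk_eq_tmk_iff (p q : U × V) :
    tmk G H K U V p = tmk G H K U V q ↔
      ∃ h : H, p.1 = ((1, h) : G × H) • q.1 ∧ p.2 = ((h, 1) : H × K) • q.2 :=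
  Quotient.eq (r := tensorSetoid G H K U V)

lemma stabilizer_tmk (u : U) (v : V) :
    MulAction.stabilizer (G × K) (tmk G H K U V (u, v)) =
      starProd (MulAction.stabilizer (G × H) u) (MulAction.stabilizer (H × K) v) := by
  ext ⟨g, k⟩
  rw [MulAction.mem_stabilizer_iff, mk_mem_starProd_iff]
  change tmk G H K U V (((g, 1) : G × H) • u, ((1, k) : H × K) • v) = _ ↔ _
  rw [tmk_eq_tmk_iff, ← (Equiv.inv H).exists_congr_right]
  refine exists_congr fun h => and_congr ?_ ?_
  all_goals
    rw [MulAction.mem_stabilizer_iff, ← inv_smul_eq_iff, smul_smul]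
    simp

theorem le_projFst_stabilizer_tmk_iff
    (hfree : ∀ (u : U) (h : H), ((1, h) : G × H) • u = u → h = 1)
    (L : Subgroup G) (u : U) (v : V) :
    L ≤ projFst (MulAction.stabilizer (G × K) (tmk G H K U V (u, v))) ↔
      L ≤ projFst (MulAction.stabilizer (G × H) u) ∧
        lstarSub L (MulAction.stabilizer (G × H) u) ≤
          projFst (MulAction.stabilizer (H × K) v) := by
  rw [stabilizer_tmk]
  exact le_projFst_starProd_iff _ (hfree u) L

end Tensor
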